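/- For every natural number k, the integral ∫_0^∞ e^{-x} L_k(x)^3 dx equals (-1)^k Σ_{j=0}^{k} C(k,j)^3, i.e. up to sign the Franel number Σ_j C(k,j)^3. -/

import Mathlib

/-- The simple Laguerre polynomial `L_a(x) = ∑_{α=0}^{a} (-1)^α C(a,α) x^α / α!`. -/
noncomputable def laguerre (a : ℕ) (x : ℝ) : ℝ :=
  ∑ α ∈ Finset.range (a + 1), (-1 : ℝ) ^ α * (Nat.choose a α : ℝ) * x ^ α / (Nat.factorial α : ℝ)

/-!
Expanding the cube and using `∫₀^∞ e^{-x} x^n dx = n!`, integrating one factor `L_k` against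
`x^n` gives `(-1)^k n! C(n,k)`, because `∑_c (-1)^c C(k,c) C(n+c,n)` is a `k`-th forward
difference of the degree-`n` polynomial `x ↦ C(x,n)`. What remains is the identity
`∑_{a,b} (-1)^{a+b} C(k,a) C(k,b) C(a+b,a) C(a+b,k) = ∑_j C(k,j)³`. Expanding `C(a+b,k)` by
Vandermonde, the term indexed by `i + j = k` becomes, after the trinomial revisions
`C(k,a) C(a,i) = C(k,i) C(j,a-i)` and `C(k,b) C(b,j) = C(k,j) C(i,b-j)`, a double forward
difference of binomial coefficients, equal to `C(k,i)² C(k,j) = C(k,i)³`.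
-/

open Finset fwdDiff MeasureTheory Real Set
open scoped Nat

theorem alternating_sum_choose_mul_eq_fwdDiff_iter (f : ℕ → ℤ) (K n : ℕ) :
    ∑ c ∈ range (K + 1), (-1 : ℤ) ^ c * K.choose c * f (n + c) =
      (-1) ^ K * Δ_[1] ^[K] f n := by
  rw [fwdDiff_iter_eq_sum_shift, mul_sum]
  refine sum_congr rfl fun c hc ↦ ?_
  have hcK : c ≤ K := Nat.lt_succ_iff.mp (mem_range.mp hc)
  rw [smul_eq_mul, smul_eq_mul, mul_one, ← mul_assoc, ← mul_assoc, ← pow_add,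
    show K + (K - c) = c + 2 * (K - c) by omega, pow_add, pow_mul]
  simp

theorem fwdDiff_iter_choose_eq_zero_of_lt {m K : ℕ} (h : m < K) :
    Δ_[1] ^[K] (fun x ↦ (x.choose m : ℤ)) = 0 := by
  obtain ⟨r, rfl⟩ := Nat.exists_eq_add_of_lt h
  have hm : Δ_[1] ^[m] (fun x ↦ (x.choose m : ℤ)) = fun _ ↦ 1 := by
    simpa using fwdDiff_iter_choose 0 m
  rw [show m + r + 1 = r + 1 + m by ring, Function.iterate_add_apply, hm]
  simp only [Function.iterate_succ_apply, fwdDiff_const]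
  exact Function.iterate_fixed (fwdDiff_const (h := 1) (0 : ℤ)) r

theorem alternating_sum_choose_mul_choose_add (K j n : ℕ) :
    ∑ c ∈ range (K + 1), (-1 : ℤ) ^ c * K.choose c * (n + c).choose (K + j) =
      (-1) ^ K * n.choose j := by
  rw [alternating_sum_choose_mul_eq_fwdDiff_iter (fun x ↦ (x.choose (K + j) : ℤ)),
    fwdDiff_iter_choose]

theorem alternating_sum_choose_mul_add_choose_left (K n : ℕ) :
    ∑ c ∈ range (K + 1), (-1 : ℤ) ^ c * K.choose c * (n + c).choose n =
      (-1) ^ K * n.choose K := by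
  rcases le_or_gt K n with hKn | hnK
  · obtain ⟨j, rfl⟩ := Nat.exists_eq_add_of_le hKn
    rw [alternating_sum_choose_mul_choose_add, Nat.choose_symm_add]
  · rw [alternating_sum_choose_mul_eq_fwdDiff_iter (fun x ↦ (x.choose n : ℤ)),
      fwdDiff_iter_choose_eq_zero_of_lt hnK, Nat.choose_eq_zero_of_lt hnK]
    simp

theorem alternating_sum_choose_mul_choose_mul {p q n : ℕ} (hn : p + q = n) (f : ℕ → ℤ) :
    ∑ b ∈ range (n + 1), (-1 : ℤ) ^ b * n.choose b * b.choose q * f b =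
      (-1) ^ q * n.choose q * ∑ d ∈ range (p + 1), (-1) ^ d * p.choose d * f (q + d) := by
  subst hn
  rw [show p + q + 1 = q + (p + 1) by ring, sum_range_add, mul_sum]
  have below : ∀ b ∈ range q, (-1 : ℤ) ^ b * (p + q).choose b * b.choose q * f b = 0 := by
    intro b hb
    simp [Nat.choose_eq_zero_of_lt (mem_range.mp hb)]
  rw [sum_eq_zero below, zero_add]
  refine sum_congr rfl fun d _ ↦ ?_
  have trinomial :
      ((p + q).choose (q + d) * (q + d).choose q : ℤ) = (p + q).choose q * p.choose d := by
    exact_mod_cast by simpa using Nat.choose_mul (n := p + q) (Nat.le_add_right q d)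
  linear_combination (-1 : ℤ) ^ (q + d) * f (q + d) * trinomial

theorem alternating_double_sum_choose_mul_choose_eq (i j : ℕ) :
    ∑ a ∈ range (i + j + 1), ∑ b ∈ range (i + j + 1),
      (-1 : ℤ) ^ a * (i + j).choose a * a.choose i *
        ((-1) ^ b * (i + j).choose b * b.choose j * (a + b).choose a) =
      (i + j).choose i * (i + j).choose j ^ 2 := by
  have inner : ∀ e ∈ range (j + 1), ∑ d ∈ range (i + 1),
      (-1 : ℤ) ^ d * i.choose d * (i + e + (j + d)).choose (i + e) =
        (-1) ^ i * (i + e + j).choose e := by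
    intro e _
    simp_rw [← add_assoc (i + e) j]
    exact alternating_sum_choose_mul_choose_add i e (i + e + j)
  have outer : ∑ e ∈ range (j + 1), (-1 : ℤ) ^ e * j.choose e * (i + e + j).choose e =
      (-1) ^ j * (i + j).choose j := by
    rw [← alternating_sum_choose_mul_add_choose_left]
    refine sum_congr rfl fun e _ ↦ ?_
    rw [show i + e + j = i + j + e by ring, Nat.choose_symm_add]
  calc _ = ∑ a ∈ range (i + j + 1), (-1 : ℤ) ^ a * (i + j).choose a * a.choose i *
          ((-1) ^ j * (i + j).choose j *
            ∑ d ∈ range (i + 1), (-1 : ℤ) ^ d * i.choose d * (a + (j + d)).choose a) := by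
        refine sum_congr rfl fun a _ ↦ ?_
        simp_rw [← mul_sum]
        rw [alternating_sum_choose_mul_choose_mul rfl fun b ↦ ((a + b).choose a : ℤ)]
    _ = (-1 : ℤ) ^ i * (i + j).choose i * ∑ e ∈ range (j + 1),
          (-1 : ℤ) ^ j * (i + j).choose j * (-1) ^ i *
            ((-1) ^ e * j.choose e * (i + e + j).choose e) := by
        rw [alternating_sum_choose_mul_choose_mul (add_comm j i)]
        refine congrArg _ (sum_congr rfl fun e he ↦ ?_)
        rw [inner e he]
        ring
    _ = (i + j).choose i * (i + j).choose j ^ 2 := by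
        rw [← mul_sum, outer]
        linear_combination ((i + j).choose i * (i + j).choose j ^ 2 : ℤ) *
          (even_two_mul (i + j)).neg_one_pow (α := ℤ)

theorem alternating_double_sum_choose_add_choose_eq_sum_choose_pow_three (k : ℕ) :
    ∑ a ∈ range (k + 1), ∑ b ∈ range (k + 1),
      (-1 : ℤ) ^ (a + b) * k.choose a * k.choose b * (a + b).choose a * (a + b).choose k =
      ∑ j ∈ range (k + 1), (k.choose j : ℤ) ^ 3 := by
  have vandermonde (a b : ℕ) : ((a + b).choose k : ℤ) =
      ∑ ij ∈ antidiagonal k, (a.choose ij.1 * b.choose ij.2 : ℤ) := by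
    exact_mod_cast Nat.add_choose_eq a b k
  calc _ = ∑ a ∈ range (k + 1), ∑ b ∈ range (k + 1), ∑ ij ∈ antidiagonal k,
          (-1 : ℤ) ^ a * k.choose a * a.choose ij.1 *
            ((-1) ^ b * k.choose b * b.choose ij.2 * (a + b).choose a) := by
        refine sum_congr rfl fun a _ ↦ sum_congr rfl fun b _ ↦ ?_
        rw [vandermonde, mul_sum]
        refine sum_congr rfl fun ij _ ↦ ?_
        ring
    _ = ∑ ij ∈ antidiagonal k, ∑ a ∈ range (k + 1), ∑ b ∈ range (k + 1),
          (-1 : ℤ) ^ a * k.choose a * a.choose ij.1 *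
            ((-1) ^ b * k.choose b * b.choose ij.2 * (a + b).choose a) := by
        exact (sum_congr rfl fun _ _ ↦ sum_comm).trans sum_comm
    _ = ∑ ij ∈ antidiagonal k, (k.choose ij.1 : ℤ) ^ 3 := by
        refine sum_congr rfl fun ⟨i, j⟩ hij ↦ ?_
        obtain rfl : i + j = k := mem_antidiagonal.mp hij
        rw [alternating_double_sum_choose_mul_choose_eq, ← Nat.choose_symm_add]
        ring
    _ = ∑ j ∈ range (k + 1), (k.choose j : ℤ) ^ 3 :=
        Nat.sum_antidiagonal_eq_sum_range_succ (fun i _ ↦ (k.choose i : ℤ) ^ 3) k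

theorem integrableOn_exp_neg_mul_pow (n : ℕ) :
    IntegrableOn (fun x : ℝ ↦ exp (-x) * x ^ n) (Ioi 0) := by
  refine (GammaIntegral_convergent (s := n + 1) (by positivity)).congr_fun (fun x _ ↦ ?_)
    measurableSet_Ioi
  simp [← rpow_natCast]

theorem integral_exp_neg_mul_pow (n : ℕ) : ∫ x in Ioi (0 : ℝ), exp (-x) * x ^ n = n ! := by
  rw [← Real.Gamma_nat_eq_factorial, Real.Gamma_eq_integral (by positivity)]
  refine setIntegral_congr_fun measurableSet_Ioi fun x _ ↦ ?_
  simp [← rpow_natCast]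

theorem factorial_add_eq_mul_choose (a b : ℕ) : (a + b)! = a ! * b ! * (a + b).choose a := by
  rw [Nat.choose_symm_add, ← Nat.add_choose_mul_factorial_mul_factorial]
  ring

theorem laguerre_eq_sum (k : ℕ) (x : ℝ) :
    laguerre k x = ∑ c ∈ range (k + 1), (-1) ^ c * k.choose c / c ! * x ^ c := by
  refine sum_congr rfl fun c _ ↦ ?_
  ring

theorem exp_neg_mul_pow_mul_laguerre (n k : ℕ) (x : ℝ) :
    exp (-x) * x ^ n * laguerre k x =
      ∑ c ∈ range (k + 1), (-1) ^ c * k.choose c / c ! * (exp (-x) * x ^ (n + c)) := by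
  rw [laguerre_eq_sum, mul_sum]
  refine sum_congr rfl fun c _ ↦ ?_
  ring

theorem integrableOn_exp_neg_mul_pow_mul_laguerre (n k : ℕ) :
    IntegrableOn (fun x : ℝ ↦ exp (-x) * x ^ n * laguerre k x) (Ioi 0) := by
  simp_rw [exp_neg_mul_pow_mul_laguerre]
  exact integrable_finsetSum _ fun c _ ↦ (integrableOn_exp_neg_mul_pow (n + c)).const_mul _

theorem integral_exp_neg_mul_pow_mul_laguerre (n k : ℕ) :
    ∫ x in Ioi (0 : ℝ), exp (-x) * x ^ n * laguerre k x = (-1) ^ k * n ! * n.choose k := by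
  simp_rw [exp_neg_mul_pow_mul_laguerre]
  rw [integral_finsetSum _ fun c _ ↦ (integrableOn_exp_neg_mul_pow (n + c)).const_mul _]
  simp_rw [integral_const_mul, integral_exp_neg_mul_pow]
  have alternating : ∑ c ∈ range (k + 1), (-1 : ℝ) ^ c * k.choose c * (n + c).choose n =
      (-1) ^ k * n.choose k := by
    exact_mod_cast alternating_sum_choose_mul_add_choose_left k n
  rw [mul_right_comm, ← alternating, sum_mul]
  refine sum_congr rfl fun c _ ↦ ?_
  rw [factorial_add_eq_mul_choose]
  push_cast
  field_simp

theorem exp_neg_mul_laguerre_pow_three (k : ℕ) (x : ℝ) :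
    exp (-x) * laguerre k x ^ 3 =
      ∑ a ∈ range (k + 1), ∑ b ∈ range (k + 1),
        (-1) ^ a * k.choose a / a ! * ((-1) ^ b * k.choose b / b !) *
          (exp (-x) * x ^ (a + b) * laguerre k x) := by
  calc _ = (∑ a ∈ range (k + 1), (-1) ^ a * k.choose a / a ! * x ^ a) *
          (∑ b ∈ range (k + 1), (-1) ^ b * k.choose b / b ! * x ^ b) *
            (exp (-x) * laguerre k x) := by
        rw [← laguerre_eq_sum]
        ring
    _ = _ := by
        rw [sum_mul_sum, sum_mul]
        refine sum_congr rfl fun a _ ↦ ?_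
        rw [sum_mul]
        refine sum_congr rfl fun b _ ↦ ?_
        ring

theorem integral_exp_neg_mul_laguerre_pow_three (k : ℕ) :
    ∫ x in Ioi (0 : ℝ), exp (-x) * laguerre k x ^ 3 =
      ∑ a ∈ range (k + 1), ∑ b ∈ range (k + 1),
        (-1) ^ a * k.choose a / a ! * ((-1) ^ b * k.choose b / b !) *
          ((-1 : ℝ) ^ k * (a + b)! * (a + b).choose k) := by
  have integrable (a b : ℕ) (r : ℝ) :=
    (integrableOn_exp_neg_mul_pow_mul_laguerre (a + b) k).const_mul r
  simp_rw [exp_neg_mul_laguerre_pow_three]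
  rw [integral_finsetSum _ fun a _ ↦ integrable_finsetSum _ fun b _ ↦ integrable a b _]
  refine sum_congr rfl fun a _ ↦ ?_
  rw [integral_finsetSum _ fun b _ ↦ integrable a b _]
  refine sum_congr rfl fun b _ ↦ ?_
  rw [integral_const_mul, integral_exp_neg_mul_pow_mul_laguerre]

theorem laguerre_cube_integral_franel (k : ℕ) :
    ∫ x in Set.Ioi (0 : ℝ), Real.exp (-x) * (laguerre k x) ^ 3 =
      (-1 : ℝ) ^ k * ∑ j ∈ Finset.range (k + 1), ((Nat.choose k j : ℝ)) ^ 3 := by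
  have franel : ∑ a ∈ range (k + 1), ∑ b ∈ range (k + 1),
      (-1 : ℝ) ^ (a + b) * k.choose a * k.choose b * (a + b).choose a * (a + b).choose k =
      ∑ j ∈ range (k + 1), (k.choose j : ℝ) ^ 3 := by
    exact_mod_cast alternating_double_sum_choose_add_choose_eq_sum_choose_pow_three k
  rw [integral_exp_neg_mul_laguerre_pow_three, ← franel, mul_sum]
  refine sum_congr rfl fun a _ ↦ ?_
  rw [mul_sum]
  refine sum_congr rfl fun b _ ↦ ?_
  rw [factorial_add_eq_mul_choose]
  push_cast
  field_simp
  ring
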